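/- arXiv:2604.00759 — 7 statements merged into one kernel-verified Lean document; each statement's English description precedes it below -/
import Mathlib

section
/- Let X, Y be Hilbert spaces and A : X → Y a compact linear operator with operator norm ‖A‖ = 1. Let x† ∈ X satisfy the source condition x† = A*z with ‖z‖ ≤ ρ, set y† = Ax†, and let y^δ ∈ Y with ‖y^δ − y†‖ ≤ δ. For 0 < α ≤ 1, the Tikhonov reconstruction T_α y^δ = (A*A + αI)⁻¹ A* y^δ satisfies ‖T_α y^δ − x†‖ ≤ (1/2)(δ/√α + √α · ρ). -/
/-!
Write `e = x_α - x†`. Since `x† = A*z`, the normal equation gives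
`(A*A + αI) e = A*(y^δ - A x† - α z)`; pairing with `e` yields
`‖Ae‖² + α‖e‖² ≤ (δ + αρ)‖Ae‖`, and maximising `(δ + αρ)t - t²` over `t = ‖Ae‖` leaves
`α‖e‖² ≤ (δ + αρ)²/4`, i.e. `‖e‖ ≤ (δ + αρ)/(2√α)`.
-/

open scoped InnerProduct

section Tikhonov

variable {X Y : Type*} [NormedAddCommGroup X] [InnerProductSpace ℝ X] [CompleteSpace X]
  [NormedAddCommGroup Y] [InnerProductSpace ℝ Y] [CompleteSpace Y]

theorem ContinuousLinearMap.real_inner_adjoint_apply_add_smul_self (A : X →L[ℝ] Y) (α : ℝ)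
    (x : X) : inner ℝ ((A†) (A x) + α • x) x = ‖A x‖ ^ 2 + α * ‖x‖ ^ 2 := by
  rw [inner_add_left, adjoint_inner_left, real_inner_smul_left, real_inner_self_eq_norm_sq,
    real_inner_self_eq_norm_sq]

theorem tikhonov_error_normal_eq (A : X →L[ℝ] Y) {α : ℝ} {z yδ : Y} {xα : X}
    (hxα : (A†) (A xα) + α • xα = (A†) yδ) :
    (A†) (A (xα - (A†) z)) + α • (xα - (A†) z) = (A†) (yδ - A ((A†) z) - α • z) := by
  simp only [map_sub, map_smul, smul_sub]
  rw [← hxα]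
  abel

theorem tikhonov_error_energy_le (A : X →L[ℝ] Y) {α : ℝ} {z yδ : Y} {xα : X}
    (hxα : (A†) (A xα) + α • xα = (A†) yδ) (hα : 0 ≤ α) :
    ‖A (xα - (A†) z)‖ ^ 2 + α * ‖xα - (A†) z‖ ^ 2
      ≤ (‖yδ - A ((A†) z)‖ + α * ‖z‖) * ‖A (xα - (A†) z)‖ := by
  set e := xα - (A†) z
  calc ‖A e‖ ^ 2 + α * ‖e‖ ^ 2
      = inner ℝ (yδ - A ((A†) z) - α • z) (A e) := by
        rw [← A.real_inner_adjoint_apply_add_smul_self, tikhonov_error_normal_eq A hxα,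
          ContinuousLinearMap.adjoint_inner_left]
    _ ≤ ‖yδ - A ((A†) z) - α • z‖ * ‖A e‖ := real_inner_le_norm _ _
    _ ≤ (‖yδ - A ((A†) z)‖ + α * ‖z‖) * ‖A e‖ := by
        gcongr
        refine (norm_sub_le _ _).trans_eq ?_
        rw [norm_smul, Real.norm_of_nonneg hα]

end Tikhonov

theorem Real.sqrt_mul_le_half_of_sq_add_mul_sq_le {α c t u : ℝ} (hα : 0 ≤ α) (hc : 0 ≤ c)
    (h : t ^ 2 + α * u ^ 2 ≤ c * t) : √α * u ≤ c / 2 := by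
  have hsq : (√α * u) ^ 2 ≤ (c / 2) ^ 2 := by
    rw [mul_pow, Real.sq_sqrt hα]
    nlinarith [sq_nonneg (t - c / 2)]
  exact (le_abs_self _).trans (abs_le_of_sq_le_sq hsq (by positivity))

theorem tikhonov_error_small_alpha_general
    {X Y : Type*} [NormedAddCommGroup X] [InnerProductSpace ℝ X] [CompleteSpace X]
    [NormedAddCommGroup Y] [InnerProductSpace ℝ Y] [CompleteSpace Y]
    (A : X →L[ℝ] Y)
    (z : Y) (ρ : ℝ) (hz : ‖z‖ ≤ ρ)
    (xdag : X) (hxdag : xdag = ContinuousLinearMap.adjoint A z)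
    (δ : ℝ) (yδ : Y) (hnoise : ‖yδ - A xdag‖ ≤ δ)
    (α : ℝ) (hα : 0 < α)
    (xα : X)
    (hxα : ContinuousLinearMap.adjoint A (A xα) + α • xα
            = ContinuousLinearMap.adjoint A yδ) :
    ‖xα - xdag‖ ≤ (1/2) * (δ / Real.sqrt α + Real.sqrt α * ρ) := by
  subst hxdag
  have hδ : 0 ≤ δ := (norm_nonneg _).trans hnoise
  have hρ : 0 ≤ ρ := (norm_nonneg _).trans hz
  have hc : 0 ≤ δ + α * ρ := by positivity
  have henergy : ‖A (xα - (A†) z)‖ ^ 2 + α * ‖xα - (A†) z‖ ^ 2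
      ≤ (δ + α * ρ) * ‖A (xα - (A†) z)‖ :=
    (tikhonov_error_energy_le A hxα hα.le).trans (by gcongr)
  have hsqrt : 0 < √α := Real.sqrt_pos.mpr hα
  have hrhs : (1 / 2) * (δ / √α + √α * ρ) = (δ + α * ρ) / 2 / √α := by
    field_simp
    rw [Real.sq_sqrt hα.le]
    ring
  rw [hrhs, le_div_iff₀ hsqrt, mul_comm]
  exact Real.sqrt_mul_le_half_of_sq_add_mul_sq_le hα.le hc henergy

/-- Tikhonov error bound for `0 < α ≤ 1` under the source condition `x† = A*z`,
`‖z‖ ≤ ρ`, for a compact operator with `‖A‖ = 1`. The reconstruction `T_α y^δ` is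
characterized as the solution of the normal equation `(A*A + αI) x_α = A* y^δ`. -/
theorem tikhonov_error_small_alpha
    {X Y : Type*} [NormedAddCommGroup X] [InnerProductSpace ℝ X] [CompleteSpace X]
    [NormedAddCommGroup Y] [InnerProductSpace ℝ Y] [CompleteSpace Y]
    (A : X →L[ℝ] Y) (hA : IsCompactOperator A) (hAnorm : ‖A‖ = 1)
    (z : Y) (ρ : ℝ) (hz : ‖z‖ ≤ ρ)
    (xdag : X) (hxdag : xdag = ContinuousLinearMap.adjoint A z)
    (δ : ℝ) (yδ : Y) (hnoise : ‖yδ - A xdag‖ ≤ δ)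
    (α : ℝ) (hα : 0 < α) (hα1 : α ≤ 1)
    (xα : X)
    (hxα : ContinuousLinearMap.adjoint A (A xα) + α • xα
            = ContinuousLinearMap.adjoint A yδ) :
    ‖xα - xdag‖ ≤ (1/2) * (δ / Real.sqrt α + Real.sqrt α * ρ) :=
  tikhonov_error_small_alpha_general A z ρ hz xdag hxdag δ yδ hnoise α hα xα hxα
end

section
/- Let X, Y be Hilbert spaces and A : X → Y a compact linear operator with ‖A‖ = 1. Under the source condition x† = A*z with ‖z‖ ≤ ρ, for α > 1 the Tikhonov reconstruction satisfies ‖T_α y^δ − x†‖ ≤ (δ + αρ)/(1 + α) whenever ‖y^δ − Ax†‖ ≤ δ. -/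
/-!
Write `e = xα - x†` and `w = (yδ - A x†) - α z`. The source condition turns the normal equation
into `A*A e + α e = A* w`; pairing it with `e` gives `‖A e‖² + α ‖e‖² = ⟪w, A e⟫ ≤ ‖w‖ ‖A e‖`.
Since `‖A e‖ ≤ ‖e‖ ≤ α ‖e‖`, the left side is at least `(1 + α) ‖e‖ ‖A e‖`, so
`(1 + α) ‖e‖ ≤ ‖w‖ ≤ δ + α ρ`.
-/

open ContinuousLinearMap

lemma one_add_mul_le_of_sq_add_mul_sq_le {s t W α : ℝ} (h : t ^ 2 + α * s ^ 2 ≤ W * t)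
    (hts : t ≤ s) (ht : 0 ≤ t) (hW : 0 ≤ W) (hα : 1 ≤ α) :
    (1 + α) * s ≤ W := by
  -- `t² + α s² - (1 + α) s t = (s - t)(α s - t)`
  have hprod : 0 ≤ (s - t) * (α * s - t) := mul_nonneg (by linarith) (by nlinarith)
  rcases ht.eq_or_lt with rfl | ht
  · have hs : s = 0 := by nlinarith
    simpa [hs] using hW
  · exact le_of_mul_le_mul_right (by nlinarith) ht

section

variable {E F : Type*} [NormedAddCommGroup E] [InnerProductSpace ℝ E] [CompleteSpace E]
  [NormedAddCommGroup F] [InnerProductSpace ℝ F] [CompleteSpace F]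

lemma norm_sq_add_mul_norm_sq_eq_inner_of_adjoint_apply_add_smul_eq {A : E →L[ℝ] F} {α : ℝ}
    {e : E} {w : F} (h : adjoint A (A e) + α • e = adjoint A w) :
    ‖A e‖ ^ 2 + α * ‖e‖ ^ 2 = inner ℝ w (A e) := by
  have h' := congrArg (fun v => inner ℝ v e) h
  simpa only [inner_add_left, real_inner_smul_left, adjoint_inner_left,
    real_inner_self_eq_norm_sq] using h'

lemma one_add_mul_norm_le_of_adjoint_apply_add_smul_eq {A : E →L[ℝ] F} (hA : ‖A‖ ≤ 1)
    {α : ℝ} (hα : 1 ≤ α) {e : E} {w : F} (h : adjoint A (A e) + α • e = adjoint A w) :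
    (1 + α) * ‖e‖ ≤ ‖w‖ := by
  have hAe : ‖A e‖ ≤ ‖e‖ := by simpa using A.le_of_opNorm_le hA e
  have henergy : ‖A e‖ ^ 2 + α * ‖e‖ ^ 2 ≤ ‖w‖ * ‖A e‖ :=
    (norm_sq_add_mul_norm_sq_eq_inner_of_adjoint_apply_add_smul_eq h).le.trans
      (real_inner_le_norm w (A e))
  exact one_add_mul_le_of_sq_add_mul_sq_le henergy hAe (norm_nonneg _) (norm_nonneg _) hα

end

theorem tikhonov_error_large_alpha_general
    {X Y : Type*} [NormedAddCommGroup X] [InnerProductSpace ℝ X] [CompleteSpace X]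
    [NormedAddCommGroup Y] [InnerProductSpace ℝ Y] [CompleteSpace Y]
    (A : X →L[ℝ] Y) (hAnorm : ‖A‖ = 1)
    (z : Y) (ρ : ℝ) (hz : ‖z‖ ≤ ρ)
    (xdag : X) (hxdag : xdag = ContinuousLinearMap.adjoint A z)
    (δ : ℝ) (yδ : Y) (hnoise : ‖yδ - A xdag‖ ≤ δ)
    (α : ℝ) (hα : 1 < α)
    (xα : X)
    (hxα : ContinuousLinearMap.adjoint A (A xα) + α • xα
            = ContinuousLinearMap.adjoint A yδ) :
    ‖xα - xdag‖ ≤ (δ + α * ρ) / (1 + α) := by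
  set w : Y := (yδ - A xdag) - α • z
  have hnormal : adjoint A (A (xα - xdag)) + α • (xα - xdag) = adjoint A w := by
    simp only [w, map_sub, map_smul, ← hxdag]
    linear_combination (norm := module) hxα
  have hw : ‖w‖ ≤ δ + α * ρ := calc
    ‖w‖ ≤ ‖yδ - A xdag‖ + α * ‖z‖ := by
      simpa [norm_smul, abs_of_pos (zero_lt_one.trans hα)] using norm_sub_le (yδ - A xdag) (α • z)
    _ ≤ δ + α * ρ := by gcongr
  rw [le_div_iff₀ (by linarith), mul_comm]
  exact (one_add_mul_norm_le_of_adjoint_apply_add_smul_eq hAnorm.le hα.le hnormal).trans hw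

/-- Tikhonov error bound for `α > 1` under the source condition `x† = A*z`,
`‖z‖ ≤ ρ`, for a compact operator with `‖A‖ = 1`. -/
theorem tikhonov_error_large_alpha
    {X Y : Type*} [NormedAddCommGroup X] [InnerProductSpace ℝ X] [CompleteSpace X]
    [NormedAddCommGroup Y] [InnerProductSpace ℝ Y] [CompleteSpace Y]
    (A : X →L[ℝ] Y) (hA : IsCompactOperator A) (hAnorm : ‖A‖ = 1)
    (z : Y) (ρ : ℝ) (hz : ‖z‖ ≤ ρ)
    (xdag : X) (hxdag : xdag = ContinuousLinearMap.adjoint A z)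
    (δ : ℝ) (yδ : Y) (hnoise : ‖yδ - A xdag‖ ≤ δ)
    (α : ℝ) (hα : 1 < α)
    (xα : X)
    (hxα : ContinuousLinearMap.adjoint A (A xα) + α • xα
            = ContinuousLinearMap.adjoint A yδ) :
    ‖xα - xdag‖ ≤ (δ + α * ρ) / (1 + α) :=
  tikhonov_error_large_alpha_general A hAnorm z ρ hz xdag hxdag δ yδ hnoise α hα xα hxα
end

section
/- Let A : X → Y be a compact linear operator between Hilbert spaces with ‖A‖ = 1, let X_N ⊂ X be a closed subspace, and suppose x† = A*z with z in the range of A restricted to X_N, ‖z‖ ≤ ρ, and that ‖(αI + A*A)⁻¹A*‖ restricted to range(A|_{X_N}) is bounded by CN for all 0 < α ≤ 1. Then for 0 < α ≤ 1 and ‖y^δ − Ax†‖ ≤ δ, the Tikhonov reconstruction satisfies ‖T_α y^δ − x†‖ ≤ δ/(2√α) + min{√α·ρ/2, αCNρ}. -/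
/-!
Let `v` solve `(αI + A*A) v = A*z`. Since `x† = A*z`, the error splits as `x_α - x† = u - α v`,
where `u` solves `(αI + A*A) u = A*(y^δ - A x†)`. Testing `(αI + A*A) v = A*w` against `v` gives
`α‖v‖² + ‖Av‖² ≤ ‖Av‖‖w‖`, hence `‖v‖ ≤ ‖w‖ / (2√α)`; this bounds `u` by `δ / (2√α)` and `α v`
by `√α ρ / 2`, while the hypothesis on `range(A|_{X_N})` bounds `α v` by `α C N ρ`.
-/

open ContinuousLinearMap

section Tikhonov

variable {X Y : Type*} [NormedAddCommGroup X] [InnerProductSpace ℝ X] [CompleteSpace X]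
  [NormedAddCommGroup Y] [InnerProductSpace ℝ Y] [CompleteSpace Y] (A : X →L[ℝ] Y) {α : ℝ}

theorem inner_smul_add_adjoint_apply_self (α : ℝ) (v : X) :
    inner ℝ (α • v + adjoint A (A v)) v = α * ‖v‖ ^ 2 + ‖A v‖ ^ 2 := by
  rw [inner_add_left, real_inner_smul_left, real_inner_self_eq_norm_sq, adjoint_inner_left,
    real_inner_self_eq_norm_sq]

theorem exists_smul_add_adjoint_apply_eq (hα : 0 < α) (b : X) :
    ∃ v : X, α • v + adjoint A (A v) = b := by
  have hunit : IsUnit (α • (1 : X →L[ℝ] X) + adjoint A ∘L A) := by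
    refine isUnit_of_forall_le_norm_inner_map _ (Real.toNNReal_pos.mpr hα) fun v => ?_
    change _ ≤ ‖inner ℝ (α • v + adjoint A (A v)) v‖
    rw [inner_smul_add_adjoint_apply_self, Real.norm_eq_abs, Real.coe_toNNReal _ hα.le]
    nlinarith [le_abs_self (α * ‖v‖ ^ 2 + ‖A v‖ ^ 2), sq_nonneg ‖A v‖]
  exact (isUnit_iff_bijective.mp hunit).surjective b

theorem norm_le_of_smul_add_adjoint_apply_eq (hα : 0 < α) {v : X} {w : Y}
    (h : α • v + adjoint A (A v) = adjoint A w) :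
    ‖v‖ ≤ ‖w‖ / (2 * √α) := by
  have hinner : α * ‖v‖ ^ 2 + ‖A v‖ ^ 2 = inner ℝ (A v) w := by
    rw [← inner_smul_add_adjoint_apply_self, h, adjoint_inner_left, real_inner_comm]
  have hcs : inner ℝ (A v) w ≤ ‖A v‖ * ‖w‖ := real_inner_le_norm _ _
  -- AM-GM: `‖A v‖ ‖w‖ - ‖A v‖² ≤ ‖w‖² / 4`
  have hsq : (2 * √α * ‖v‖) ^ 2 ≤ ‖w‖ ^ 2 := by
    rw [mul_pow, mul_pow, Real.sq_sqrt hα.le]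
    nlinarith [sq_nonneg (2 * ‖A v‖ - ‖w‖)]
  rw [le_div_iff₀ (by positivity), mul_comm]
  exact (sq_le_sq₀ (by positivity) (norm_nonneg w)).mp hsq

theorem smul_add_adjoint_apply_tikhonov_error {x v : X} {y z : Y}
    (hx : adjoint A (A x) + α • x = adjoint A y) (hv : α • v + adjoint A (A v) = adjoint A z) :
    α • (x - adjoint A z + α • v) + adjoint A (A (x - adjoint A z + α • v))
      = adjoint A (y - A (adjoint A z)) := by
  simp only [map_add, map_sub, map_smul]
  linear_combination (norm := module) hx + α • hv

end Tikhonov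

theorem tikhonov_error_subspace_general
    {X Y : Type*} [NormedAddCommGroup X] [InnerProductSpace ℝ X] [CompleteSpace X]
    [NormedAddCommGroup Y] [InnerProductSpace ℝ Y] [CompleteSpace Y]
    (A : X →L[ℝ] Y)
    (XN : Submodule ℝ X)
    (N : ℕ) (C ρ : ℝ) (hC : 0 < C)
    (z : Y) (hz : ‖z‖ ≤ ρ) (hzrange : ∃ x ∈ XN, A x = z)
    (xdag : X) (hxdag : xdag = ContinuousLinearMap.adjoint A z)
    (hbound : ∀ α' : ℝ, 0 < α' → α' ≤ 1 → ∀ w : Y, (∃ x ∈ XN, A x = w) →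
      ∀ v : X, α' • v + ContinuousLinearMap.adjoint A (A v)
                = ContinuousLinearMap.adjoint A w →
        ‖v‖ ≤ C * N * ‖w‖)
    (δ : ℝ) (yδ : Y) (hnoise : ‖yδ - A xdag‖ ≤ δ)
    (α : ℝ) (hα : 0 < α) (hα1 : α ≤ 1)
    (xα : X)
    (hxα : ContinuousLinearMap.adjoint A (A xα) + α • xα
            = ContinuousLinearMap.adjoint A yδ) :
    ‖xα - xdag‖ ≤ δ / (2 * Real.sqrt α)
      + min (Real.sqrt α * ρ / 2) (α * C * N * ρ) := by
  subst hxdag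
  obtain ⟨v, hv⟩ := exists_smul_add_adjoint_apply_eq A hα (adjoint A z)
  have hnoise_err := norm_le_of_smul_add_adjoint_apply_eq A hα
    (smul_add_adjoint_apply_tikhonov_error A hxα hv)
  have hv_sqrt := norm_le_of_smul_add_adjoint_apply_eq A hα hv
  have hv_C := hbound α hα hα1 z hzrange v hv
  have hαv : α * (‖z‖ / (2 * √α)) = √α * ‖z‖ / 2 := by
    have hs := Real.sqrt_pos.2 hα
    field_simp
    linear_combination (-‖z‖) * Real.mul_self_sqrt hα.le
  calc ‖xα - adjoint A z‖ = ‖(xα - adjoint A z + α • v) - α • v‖ := by rw [add_sub_cancel_right]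
    _ ≤ ‖xα - adjoint A z + α • v‖ + α * ‖v‖ := by
      rw [← norm_smul_of_nonneg hα.le]; exact norm_sub_le _ _
    _ ≤ δ / (2 * √α) + min (√α * ρ / 2) (α * C * N * ρ) := by
      refine add_le_add (hnoise_err.trans (by gcongr)) (le_min ?_ ?_)
      · calc α * ‖v‖ ≤ α * (‖z‖ / (2 * √α)) := by gcongr
          _ ≤ √α * ρ / 2 := by rw [hαv]; gcongr
      · calc α * ‖v‖ ≤ α * (C * N * ‖z‖) := by gcongr
          _ ≤ α * C * N * ρ := by rw [← mul_assoc, ← mul_assoc]; gcongr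

/-- Refined Tikhonov error bound when the true solution lies in a closed subspace
`X_N` of dimension `N`: if `x† = A*z` with `z ∈ range(A|_{X_N})`, `‖z‖ ≤ ρ`, and
`‖(αI + A*A)⁻¹A*‖ ≤ CN` on `range(A|_{X_N})` for all `0 < α ≤ 1`, then
`‖T_α y^δ − x†‖ ≤ δ/(2√α) + min{√α ρ/2, α C N ρ}`. -/
theorem tikhonov_error_subspace
    {X Y : Type*} [NormedAddCommGroup X] [InnerProductSpace ℝ X] [CompleteSpace X]
    [NormedAddCommGroup Y] [InnerProductSpace ℝ Y] [CompleteSpace Y]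
    (A : X →L[ℝ] Y) (hA : IsCompactOperator A) (hAnorm : ‖A‖ = 1)
    (XN : Submodule ℝ X) (hXN : IsClosed (XN : Set X))
    (N : ℕ) (C ρ : ℝ) (hC : 0 < C)
    (z : Y) (hz : ‖z‖ ≤ ρ) (hzrange : ∃ x ∈ XN, A x = z)
    (xdag : X) (hxdag : xdag = ContinuousLinearMap.adjoint A z)
    (hbound : ∀ α' : ℝ, 0 < α' → α' ≤ 1 → ∀ w : Y, (∃ x ∈ XN, A x = w) →
      ∀ v : X, α' • v + ContinuousLinearMap.adjoint A (A v)
                = ContinuousLinearMap.adjoint A w →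
        ‖v‖ ≤ C * N * ‖w‖)
    (δ : ℝ) (yδ : Y) (hnoise : ‖yδ - A xdag‖ ≤ δ)
    (α : ℝ) (hα : 0 < α) (hα1 : α ≤ 1)
    (xα : X)
    (hxα : ContinuousLinearMap.adjoint A (A xα) + α • xα
            = ContinuousLinearMap.adjoint A yδ) :
    ‖xα - xdag‖ ≤ δ / (2 * Real.sqrt α)
      + min (Real.sqrt α * ρ / 2) (α * C * N * ρ) :=
  tikhonov_error_subspace_general A XN N C ρ hC z hz hzrange xdag hxdag hbound δ yδ hnoise α hα hα1
    xα hxα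
end

section
/- Let (v_i) and (u_i) be orthonormal systems, σ_i > 0 singular values, x† = Σ_{i=1}^N c_i v_i with c_i ≠ 0, and y^δ = Ax† + η with random noise η satisfying E[η_i] = 0 and E[η_i²] = β_i² < ∞ for η_i = ⟨η, u_i⟩. Let E_M = T_α^{(M)} y^δ − x† be the error of truncated Tikhonov regularization T_α^{(M)} y = Σ_{i=1}^M σ_i/(σ_i² + α) ⟨y, u_i⟩ v_i. If M ≥ N, then E[‖E_{M+1}‖²] − E[‖E_M‖²] = (σ_{M+1}/(σ_{M+1}² + α))² β_{M+1}², which is nonnegative. -/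
open MeasureTheory

/-- For truncated Tikhonov regularization `T_α^{(M)} y = Σ_{i=1}^M σ_i/(σ_i²+α)⟨y,u_i⟩v_i`
applied to `y^δ = Ax† + η` with `x† = Σ_{i=1}^N c_i v_i` (so that `⟨y^δ, u_i⟩ =
σ_i c_i + η_i` for `i ≤ N` and `η_i` for `i > N`), mean-zero noise coefficients with
variances `β_i²`: if `M ≥ N`, then the expected squared errors satisfy
`E‖E_{M+1}‖² − E‖E_M‖² = (σ_{M+1}/(σ_{M+1}²+α))² β_{M+1}² ≥ 0`. -/
theorem truncated_tikhonov_error_increase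
    {X : Type*} [NormedAddCommGroup X] [InnerProductSpace ℝ X]
    {Ω : Type*} [MeasureSpace Ω] [IsProbabilityMeasure (volume : Measure Ω)]
    (v : ℕ → X) (hv : Orthonormal ℝ v)
    (σ : ℕ → ℝ) (hσ : ∀ i, 0 < σ i)
    (N : ℕ) (c : ℕ → ℝ) (hc : ∀ i ∈ Finset.Icc 1 N, c i ≠ 0)
    (α : ℝ) (hα : 0 < α)
    (η : ℕ → Ω → ℝ) (β : ℕ → ℝ)
    (hint : ∀ i, Integrable (η i))
    (hsq : ∀ i, Integrable (fun ω => (η i ω)^2))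
    (hmean : ∀ i, ∫ ω, η i ω = 0)
    (hvar : ∀ i, ∫ ω, (η i ω)^2 = (β i)^2)
    -- coefficients of the noisy data: ⟨y^δ, u_i⟩
    (d : ℕ → Ω → ℝ)
    (hd : ∀ i ω, d i ω = (if i ≤ N then σ i * c i else 0) + η i ω)
    -- error of truncated Tikhonov regularization at truncation level M
    (E : ℕ → Ω → X)
    (hE : ∀ M ω, E M ω =
      (∑ i ∈ Finset.Icc 1 M, (σ i / ((σ i)^2 + α) * d i ω) • v i)
        - ∑ i ∈ Finset.Icc 1 N, (c i) • v i)
    (M : ℕ) (hMN : N ≤ M) :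
    (∫ ω, ‖E (M+1) ω‖^2) - (∫ ω, ‖E M ω‖^2)
      = (σ (M+1) / ((σ (M+1))^2 + α))^2 * (β (M+1))^2 ∧
    0 ≤ (σ (M+1) / ((σ (M+1))^2 + α))^2 * (β (M+1))^2 := by
  classical
  set k : ℕ → ℝ := fun i => σ i / ((σ i)^2 + α) with hk
  set b : ℕ → ℝ := fun i => if i ≤ N then c i else 0 with hb
  -- coefficients of E M
  set a : ℕ → Ω → ℝ := fun i ω => k i * d i ω - b i with ha
  have hErep : ∀ M, N ≤ M → ∀ ω, E M ω = ∑ i ∈ Finset.Icc 1 M, (a i ω) • v i := by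
    intro M hM ω
    rw [hE]
    have h2 : ∑ i ∈ Finset.Icc 1 M, (b i) • v i = ∑ i ∈ Finset.Icc 1 N, (c i) • v i := by
      rw [← Finset.sum_subset (Finset.Icc_subset_Icc_right hM)
        (fun i hi hni => by
          have : ¬ i ≤ N := fun h => hni (Finset.mem_Icc.mpr ⟨(Finset.mem_Icc.mp hi).1, h⟩)
          simp [hb, this])]
      exact Finset.sum_congr rfl fun i hi => by simp [hb, (Finset.mem_Icc.mp hi).2]
    rw [← h2, ← Finset.sum_sub_distrib]
    exact Finset.sum_congr rfl fun i hi => by rw [← sub_smul]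
  have hnorm : ∀ M, N ≤ M → ∀ ω, ‖E M ω‖^2 = ∑ i ∈ Finset.Icc 1 M, (a i ω)^2 := by
    intro M hM ω
    rw [← real_inner_self_eq_norm_sq, hErep M hM ω, hv.inner_sum]
    simp [sq, starRingEnd_apply]
  -- integrability of each (a i ·)^2
  have haint : ∀ i, Integrable (fun ω => (a i ω)^2) := by
    intro i
    have heq : (fun ω => (a i ω)^2) =
        fun ω => (k i)^2 * (η i ω)^2
          + (2 * k i * ((if i ≤ N then σ i * c i else 0) * k i - b i)) * η i ω
          + ((if i ≤ N then σ i * c i else 0) * k i - b i)^2 := by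
      funext ω
      simp only [ha, hd]
      ring
    rw [heq]
    exact (((hsq i).const_mul _).add ((hint i).const_mul _)).add (integrable_const _)
  have hEMint : Integrable (fun ω => ‖E M ω‖^2) := by
    have : (fun ω => ‖E M ω‖^2) = fun ω => ∑ i ∈ Finset.Icc 1 M, (a i ω)^2 := by
      funext ω; exact hnorm M hMN ω
    rw [this]
    exact integrable_finset_sum _ fun i _ => haint i
  -- a (M+1) = k (M+1) * η (M+1)
  have haM1 : ∀ ω, a (M+1) ω = k (M+1) * η (M+1) ω := by
    intro ω
    have h1 : ¬ M + 1 ≤ N := by omega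
    simp [ha, hd, hb, h1]
  have hsplit : ∀ ω, ‖E (M+1) ω‖^2 = ‖E M ω‖^2 + (k (M+1))^2 * (η (M+1) ω)^2 := by
    intro ω
    rw [hnorm (M+1) (by omega) ω, hnorm M hMN ω]
    rw [Finset.sum_Icc_succ_top (by omega : 1 ≤ M+1), haM1 ω]; ring
  have hI : (∫ ω, ‖E (M+1) ω‖^2)
      = (∫ ω, ‖E M ω‖^2) + (k (M+1))^2 * (β (M+1))^2 := by
    calc (∫ ω, ‖E (M+1) ω‖^2)
        = ∫ ω, (‖E M ω‖^2 + (k (M+1))^2 * (η (M+1) ω)^2) := by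
          exact integral_congr_ae (Filter.Eventually.of_forall hsplit)
      _ = (∫ ω, ‖E M ω‖^2) + ∫ ω, (k (M+1))^2 * (η (M+1) ω)^2 :=
          integral_add hEMint ((hsq (M+1)).const_mul _)
      _ = (∫ ω, ‖E M ω‖^2) + (k (M+1))^2 * (β (M+1))^2 := by
          rw [integral_const_mul, hvar]
  constructor
  · rw [hI]; ring
  · positivity
end

section
/- In the setting of truncated Tikhonov regularization with x† = Σ_{i=1}^N c_i v_i, noise coefficients η_i with mean zero and variance β_i², and M < N, it holds that E[‖E_{M+1}‖²] ≤ E[‖E_M‖²] if and only if 2α ≥ β_{M+1}²/c_{M+1}² − σ_{M+1}². -/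
open MeasureTheory


lemma aff_sq_integrable {Ω : Type*} [MeasureSpace Ω] [IsProbabilityMeasure (volume : Measure Ω)]
    (x : Ω → ℝ) (hx : Integrable x) (hx2 : Integrable (fun ω => (x ω)^2)) (k t : ℝ) :
    Integrable (fun ω => (k + t * x ω)^2) := by
  have heq : (fun ω => (k + t * x ω)^2)
      = fun ω => k^2 + ((2*k*t) * x ω + t^2 * (x ω)^2) := by funext ω; ring
  rw [heq]
  exact (integrable_const _).add ((hx.const_mul _).add (hx2.const_mul _))

lemma aff_sq_integral {Ω : Type*} [MeasureSpace Ω] [IsProbabilityMeasure (volume : Measure Ω)]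
    (x : Ω → ℝ) (hx : Integrable x) (hx2 : Integrable (fun ω => (x ω)^2))
    (hm : ∫ ω, x ω = 0) (k t : ℝ) :
    ∫ ω, (k + t * x ω)^2 = k^2 + t^2 * ∫ ω, (x ω)^2 := by
  have h1 : Integrable (fun ω => (2*k*t) * x ω) := hx.const_mul _
  have h2 : Integrable (fun ω => t^2 * (x ω)^2) := hx2.const_mul _
  have h12 : Integrable (fun ω => (2*k*t) * x ω + t^2 * (x ω)^2) := h1.add h2
  have heq : (fun ω => (k + t * x ω)^2)
      = fun ω => k^2 + ((2*k*t) * x ω + t^2 * (x ω)^2) := by funext ω; ring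
  rw [heq, integral_add (integrable_const _) h12, integral_add h1 h2,
    MeasureTheory.integral_const_mul, MeasureTheory.integral_const_mul, hm]
  simp


/-- For truncated Tikhonov regularization `T_α^{(M)} y = Σ_{i=1}^M σ_i/(σ_i²+α)⟨y,u_i⟩v_i`
applied to `y^δ = Ax† + η` with `x† = Σ_{i=1}^N c_i v_i` (so that `⟨y^δ, u_i⟩ =
σ_i c_i + η_i` for `i ≤ N` and `η_i` for `i > N`), mean-zero noise coefficients with
variances `β_i²`: if `M < N`, then
`E‖E_{M+1}‖² ≤ E‖E_M‖²` iff `2α ≥ β_{M+1}²/c_{M+1}² − σ_{M+1}²`. -/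
theorem truncated_tikhonov_error_decrease_iff
    {X : Type*} [NormedAddCommGroup X] [InnerProductSpace ℝ X]
    {Ω : Type*} [MeasureSpace Ω] [IsProbabilityMeasure (volume : Measure Ω)]
    (v : ℕ → X) (hv : Orthonormal ℝ v)
    (σ : ℕ → ℝ) (hσ : ∀ i, 0 < σ i)
    (N : ℕ) (c : ℕ → ℝ) (hc : ∀ i ∈ Finset.Icc 1 N, c i ≠ 0)
    (α : ℝ) (hα : 0 < α)
    (η : ℕ → Ω → ℝ) (β : ℕ → ℝ)
    (hint : ∀ i, Integrable (η i))
    (hsq : ∀ i, Integrable (fun ω => (η i ω)^2))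
    (hmean : ∀ i, ∫ ω, η i ω = 0)
    (hvar : ∀ i, ∫ ω, (η i ω)^2 = (β i)^2)
    -- coefficients of the noisy data: ⟨y^δ, u_i⟩
    (d : ℕ → Ω → ℝ)
    (hd : ∀ i ω, d i ω = (if i ≤ N then σ i * c i else 0) + η i ω)
    -- error of truncated Tikhonov regularization at truncation level M
    (E : ℕ → Ω → X)
    (hE : ∀ M ω, E M ω =
      (∑ i ∈ Finset.Icc 1 M, (σ i / ((σ i)^2 + α) * d i ω) • v i)
        - ∑ i ∈ Finset.Icc 1 N, (c i) • v i)
    (M : ℕ) (hMN : M < N) :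
    (∫ ω, ‖E (M+1) ω‖^2) ≤ (∫ ω, ‖E M ω‖^2) ↔
      (β (M+1))^2 / (c (M+1))^2 - (σ (M+1))^2 ≤ 2 * α := by
  have hpos : ∀ i, (0:ℝ) < (σ i)^2 + α := fun i => by positivity
  set A : ℕ → ℝ := fun i => σ i / ((σ i)^2 + α) with hA
  set F : ℕ → ℕ → ℝ := fun K i =>
    if i ≤ K then (α/((σ i)^2+α))^2*(c i)^2 + (A i)^2*(β i)^2 else (c i)^2 with hF
  have key : ∀ K, K ≤ N → (∫ ω, ‖E K ω‖^2) = ∑ i ∈ Finset.Icc 1 N, F K i := by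
    intro K hK
    set k : ℕ → ℝ := fun i => if i ≤ K then A i * (σ i * c i) - c i else -c i with hk
    set t : ℕ → ℝ := fun i => if i ≤ K then A i else 0 with ht
    have hnorm : ∀ ω, ‖E K ω‖^2 =
        ∑ i ∈ Finset.Icc 1 N, (k i + t i * η i ω)^2 := by
      intro ω
      have hsub : Finset.Icc 1 K ⊆ Finset.Icc 1 N := Finset.Icc_subset_Icc_right hK
      have h1 : ∑ i ∈ Finset.Icc 1 K, (A i * d i ω) • v i
          = ∑ i ∈ Finset.Icc 1 N, (if i ≤ K then A i * d i ω else 0) • v i := by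
        rw [← Finset.sum_subset hsub]
        · exact Finset.sum_congr rfl fun i hi => by
            rw [if_pos (Finset.mem_Icc.mp hi).2]
        · intro i hi hni
          have : ¬ i ≤ K := fun h => hni (Finset.mem_Icc.mpr ⟨(Finset.mem_Icc.mp hi).1, h⟩)
          rw [if_neg this, zero_smul]
      have hEK : E K ω = ∑ i ∈ Finset.Icc 1 N,
          ((if i ≤ K then A i * d i ω else 0) - c i) • v i := by
        rw [hE K ω, h1, ← Finset.sum_sub_distrib]
        exact Finset.sum_congr rfl fun i _ => (sub_smul _ _ _).symm
      have hcoef : ∀ i ∈ Finset.Icc 1 N,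
          (if i ≤ K then A i * d i ω else 0) - c i = k i + t i * η i ω := by
        intro i hi
        have hiN : i ≤ N := (Finset.mem_Icc.mp hi).2
        rw [hd i ω, if_pos hiN, hk, ht]
        by_cases h : i ≤ K
        · simp only [if_pos h]; ring
        · simp only [if_neg h]; ring
      calc ‖E K ω‖^2 = ‖∑ i ∈ Finset.Icc 1 N,
          ((if i ≤ K then A i * d i ω else 0) - c i) • v i‖^2 := by rw [hEK]
        _ = ∑ i ∈ Finset.Icc 1 N, (k i + t i * η i ω)^2 := by
            rw [← real_inner_self_eq_norm_sq, hv.inner_sum]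
            refine Finset.sum_congr rfl fun i hi => ?_
            rw [hcoef i hi]; simp [sq]
      
    have hint2 : ∀ i ∈ Finset.Icc 1 N,
        Integrable (fun ω => (k i + t i * η i ω)^2) := fun i _ =>
      aff_sq_integrable (η i) (hint i) (hsq i) _ _
    calc (∫ ω, ‖E K ω‖^2) = ∫ ω, ∑ i ∈ Finset.Icc 1 N, (k i + t i * η i ω)^2 := by
          simp_rw [hnorm]
      _ = ∑ i ∈ Finset.Icc 1 N, ∫ ω, (k i + t i * η i ω)^2 :=
          integral_finset_sum _ hint2
      _ = ∑ i ∈ Finset.Icc 1 N, F K i := by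
          refine Finset.sum_congr rfl fun i hi => ?_
          rw [aff_sq_integral (η i) (hint i) (hsq i) (hmean i), hvar i, hF, hk, ht]
          have hp := hpos i
          by_cases h : i ≤ K
          · simp only [if_pos h, hA]
            have : A i * (σ i * c i) - c i = -(α/((σ i)^2+α)) * c i := by
              rw [hA]; field_simp; try ring
            rw [this]; ring
          · simp only [if_neg h]; ring
  -- values at M+1
  have hmem : M + 1 ∈ Finset.Icc 1 N := Finset.mem_Icc.mpr ⟨Nat.le_add_left 1 M, hMN⟩
  have hc2 : (0:ℝ) < (c (M+1))^2 := by
    have := hc (M+1) hmem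
    positivity
  have hp := hpos (M+1)
  have hdiff : (∫ ω, ‖E M ω‖^2) - (∫ ω, ‖E (M+1) ω‖^2)
      = (c (M+1))^2 - ((α/((σ (M+1))^2+α))^2*(c (M+1))^2 + (A (M+1))^2*(β (M+1))^2) := by
    rw [key M (le_of_lt hMN), key (M+1) hMN, ← Finset.sum_sub_distrib,
      Finset.sum_eq_single (M+1)]
    · rw [hF]
      have h1 : ¬ (M+1 ≤ M) := by omega
      simp only [if_neg h1, if_pos (le_refl (M+1))]
    · intro i _ hne
      rw [hF]
      by_cases h : i ≤ M
      · have h2 : i ≤ M + 1 := by omega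
        simp only [if_pos h, if_pos h2, sub_self]
      · have h2 : ¬ i ≤ M + 1 := by omega
        simp only [if_neg h, if_neg h2, sub_self]
    · intro h; exact absurd hmem h
  have hiff2 : ((α/((σ (M+1))^2+α))^2*(c (M+1))^2 + (A (M+1))^2*(β (M+1))^2 ≤ (c (M+1))^2)
      ↔ (β (M+1))^2 ≤ ((σ (M+1))^2 + 2*α)*(c (M+1))^2 := by
    set s := σ (M+1); set cc := c (M+1); set bb := β (M+1)
    have hs := hσ (M+1)
    have hs2 : (0:ℝ) < s^2 := by positivity
    constructor
    · intro h
      have h' : α^2*cc^2 + s^2*bb^2 ≤ cc^2*(s^2+α)^2 := by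
        have := mul_le_mul_of_nonneg_right h (le_of_lt (pow_pos hp 2))
        calc α^2*cc^2 + s^2*bb^2
            = ((α/(s^2+α))^2*cc^2 + (A (M+1))^2*bb^2) * ((s^2+α)^2) := by
              rw [hA]; field_simp; try ring
          _ ≤ cc^2*(s^2+α)^2 := this
      have h'' : s^2*bb^2 ≤ s^2*(((s^2) + 2*α)*cc^2) := by nlinarith
      exact le_of_mul_le_mul_left h'' hs2
    · intro h
      have h' : α^2*cc^2 + s^2*bb^2 ≤ cc^2*(s^2+α)^2 := by nlinarith
      calc (α/(s^2+α))^2*cc^2 + (A (M+1))^2*bb^2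
          = (α^2*cc^2 + s^2*bb^2)/((s^2+α)^2) := by rw [hA]; field_simp; try ring
        _ ≤ cc^2 := by rw [div_le_iff₀ (pow_pos hp 2)]; linarith
  constructor
  · intro h
    have h2 : (α/((σ (M+1))^2+α))^2*(c (M+1))^2 + (A (M+1))^2*(β (M+1))^2 ≤ (c (M+1))^2 := by
      linarith [hdiff ▸ sub_nonneg.mpr h]
    have h3 := hiff2.mp h2
    rw [sub_le_iff_le_add, div_le_iff₀ hc2]
    linarith
  · intro h
    have h3 : (β (M+1))^2 ≤ ((σ (M+1))^2 + 2*α)*(c (M+1))^2 := by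
      rw [sub_le_iff_le_add, div_le_iff₀ hc2] at h
      linarith
    have h2 := hiff2.mpr h3
    linarith [hdiff, h2]
end

section
/- Under the hypotheses of the truncated-Tikhonov expectation lemma (x† = Σ_{i=1}^N c_i v_i with all c_i ≠ 0, mean-zero uncorrelated noise coefficients η_i with variances β_i²), if 2α ≥ max{0, max_{m < N}(β_{m+1}²/c_{m+1}² − σ_{m+1}²)}, then E[‖E_N‖²] ≤ E[‖E_M‖²] for every M ∈ ℕ. -/
/-! By orthonormality of `v` and the first two moments of the noise, `E[‖E_M‖²]` is a sum over
the components `i ≤ max M N` of `biasCoeff² + noiseCoeff² β_i²`. Against `M = N`, a truncation level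
`M` gains nothing on components `i > N` (where `E_N` vanishes) and loses on each component
`M < i ≤ N` it drops, because the squared bias `c_i²` of dropping it dominates the risk of keeping
it as soon as `β_i² ≤ c_i² (σ_i² + 2α)`, which is the hypothesis on `α`. -/

open MeasureTheory

theorem Orthonormal.norm_sum_smul_sq {ι X : Type*} [NormedAddCommGroup X] [InnerProductSpace ℝ X]
    {v : ι → X} (hv : Orthonormal ℝ v) (a : ι → ℝ) (s : Finset ι) :
    ‖∑ i ∈ s, a i • v i‖ ^ 2 = ∑ i ∈ s, a i ^ 2 := by
  rw [← real_inner_self_eq_norm_sq, hv.inner_sum]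
  simp [sq]

theorem integrable_add_mul_sq {Ω : Type*} [MeasurableSpace Ω] {μ : Measure Ω} [IsFiniteMeasure μ]
    {η : Ω → ℝ} (hint : Integrable η μ) (hsq : Integrable (fun ω => η ω ^ 2) μ) (a b : ℝ) :
    Integrable (fun ω => (a + b * η ω) ^ 2) μ := by
  simp_rw [add_sq, mul_pow]
  exact ((integrable_const _).add ((hint.const_mul b).const_mul (2 * a))).add (hsq.const_mul _)

theorem integral_add_mul_sq {Ω : Type*} [MeasurableSpace Ω] {μ : Measure Ω}
    [IsProbabilityMeasure μ] {η : Ω → ℝ} (hint : Integrable η μ)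
    (hsq : Integrable (fun ω => η ω ^ 2) μ) (hmean : ∫ ω, η ω ∂μ = 0) (a b : ℝ) :
    ∫ ω, (a + b * η ω) ^ 2 ∂μ = a ^ 2 + b ^ 2 * ∫ ω, η ω ^ 2 ∂μ := by
  have hlin : Integrable (fun ω => a ^ 2 + 2 * a * (b * η ω)) μ :=
    (integrable_const _).add ((hint.const_mul b).const_mul (2 * a))
  simp_rw [add_sq, mul_pow]
  rw [integral_add hlin (hsq.const_mul _),
    integral_add (integrable_const _) ((hint.const_mul b).const_mul (2 * a)),
    integral_const_mul, integral_const_mul, integral_const_mul, hmean, integral_const,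
    probReal_univ, one_smul, mul_zero, mul_zero, add_zero]

theorem integral_norm_sq_sum_orthonormal {ι X Ω : Type*} [NormedAddCommGroup X]
    [InnerProductSpace ℝ X] [MeasurableSpace Ω] {μ : Measure Ω} [IsProbabilityMeasure μ]
    {v : ι → X} (hv : Orthonormal ℝ v) {η : ι → Ω → ℝ} {β : ι → ℝ}
    (hint : ∀ i, Integrable (η i) μ) (hsq : ∀ i, Integrable (fun ω => η i ω ^ 2) μ)
    (hmean : ∀ i, ∫ ω, η i ω ∂μ = 0) (hvar : ∀ i, ∫ ω, η i ω ^ 2 ∂μ = β i ^ 2)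
    (a b : ι → ℝ) (s : Finset ι) :
    ∫ ω, ‖∑ i ∈ s, (a i + b i * η i ω) • v i‖ ^ 2 ∂μ = ∑ i ∈ s, (a i ^ 2 + b i ^ 2 * β i ^ 2) := by
  simp_rw [hv.norm_sum_smul_sq]
  rw [integral_finsetSum _ fun i _ => integrable_add_mul_sq (hint i) (hsq i) _ _]
  refine Finset.sum_congr rfl fun i _ => ?_
  rw [integral_add_mul_sq (hint i) (hsq i) (hmean i), hvar]

theorem Finset.sum_Icc_one_eq_sum_ite {M : Type*} [AddCommMonoid M] {m n : ℕ} (h : m ≤ n)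
    (f : ℕ → M) :
    ∑ i ∈ Finset.Icc 1 m, f i = ∑ i ∈ Finset.Icc 1 n, if i ≤ m then f i else 0 := by
  rw [← Finset.sum_filter]
  congr 1
  ext i
  simp only [Finset.mem_Icc, Finset.mem_filter]
  omega

/-- The difference of the two sides, times `(σ² + α)²`, is `σ² (c² (σ² + 2α) - β²)`. -/
theorem tikhonov_bias_sq_add_variance_le {σ c α β : ℝ} (hD : σ ^ 2 + α ≠ 0)
    (hβ : β ^ 2 ≤ c ^ 2 * (σ ^ 2 + 2 * α)) :
    (σ / (σ ^ 2 + α) * (σ * c) - c) ^ 2 + (σ / (σ ^ 2 + α)) ^ 2 * β ^ 2 ≤ c ^ 2 := by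
  have hbias : σ / (σ ^ 2 + α) * (σ * c) - c = -(α * c) / (σ ^ 2 + α) := by
    field_simp
    ring
  rw [hbias, div_pow, div_pow, ← mul_div_right_comm, ← add_div, div_le_iff₀ (by positivity)]
  nlinarith [sq_nonneg σ]

namespace TruncatedTikhonov

variable (σ c : ℕ → ℝ) (α : ℝ) (N : ℕ)

noncomputable def biasCoeff (M i : ℕ) : ℝ :=
  (if i ≤ M then σ i / (σ i ^ 2 + α) * (if i ≤ N then σ i * c i else 0) else 0)
    - if i ≤ N then c i else 0

noncomputable def noiseCoeff (M i : ℕ) : ℝ :=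
  if i ≤ M then σ i / (σ i ^ 2 + α) else 0

theorem error_eq_sum {X : Type*} [AddCommGroup X] [Module ℝ X] (v : ℕ → X) (η : ℕ → ℝ)
    {M K : ℕ} (hM : M ≤ K) (hN : N ≤ K) :
    (∑ i ∈ Finset.Icc 1 M,
        (σ i / (σ i ^ 2 + α) * ((if i ≤ N then σ i * c i else 0) + η i)) • v i)
      - ∑ i ∈ Finset.Icc 1 N, c i • v i
      = ∑ i ∈ Finset.Icc 1 K, (biasCoeff σ c α N M i + noiseCoeff σ α M i * η i) • v i := by
  rw [Finset.sum_Icc_one_eq_sum_ite hM, Finset.sum_Icc_one_eq_sum_ite hN,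
    ← Finset.sum_sub_distrib]
  refine Finset.sum_congr rfl fun i _ => ?_
  simp only [biasCoeff, noiseCoeff]
  split_ifs <;> module

theorem component_risk_le {β : ℕ → ℝ} (hα : 0 < α) {i : ℕ} (M : ℕ) (hc : i ≤ N → c i ≠ 0)
    (hβ : i ≤ N → β i ^ 2 / c i ^ 2 - σ i ^ 2 ≤ 2 * α) :
    biasCoeff σ c α N N i ^ 2 + noiseCoeff σ α N i ^ 2 * β i ^ 2
      ≤ biasCoeff σ c α N M i ^ 2 + noiseCoeff σ α M i ^ 2 * β i ^ 2 := by
  by_cases hiN : i ≤ N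
  · by_cases hiM : i ≤ M
    · simp only [biasCoeff, noiseCoeff, hiN, hiM, if_true, le_refl]
    · have hc2 : 0 < c i ^ 2 := by have := hc hiN; positivity
      have hβ' : β i ^ 2 ≤ c i ^ 2 * (σ i ^ 2 + 2 * α) := by
        have := hβ hiN
        rw [sub_le_iff_le_add, div_le_iff₀ hc2] at this
        linarith
      simp only [biasCoeff, noiseCoeff, hiN, hiM, if_true, if_false]
      simpa using tikhonov_bias_sq_add_variance_le (by positivity) hβ'
  · simp only [biasCoeff, noiseCoeff, hiN, if_false, mul_zero, ite_self, sub_zero,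
      zero_pow two_ne_zero, zero_mul, zero_add]
    positivity

end TruncatedTikhonov

open TruncatedTikhonov

theorem truncated_tikhonov_optimal_truncation_general
    {X : Type*} [NormedAddCommGroup X] [InnerProductSpace ℝ X]
    {Ω : Type*} [MeasureSpace Ω] [IsProbabilityMeasure (volume : Measure Ω)]
    (v : ℕ → X) (hv : Orthonormal ℝ v)
    (σ : ℕ → ℝ)
    (N : ℕ) (c : ℕ → ℝ) (hc : ∀ i ∈ Finset.Icc 1 N, c i ≠ 0)
    (α : ℝ) (hα : 0 < α)
    (η : ℕ → Ω → ℝ) (β : ℕ → ℝ)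
    (hint : ∀ i, Integrable (η i))
    (hsq : ∀ i, Integrable (fun ω => (η i ω)^2))
    (hmean : ∀ i, ∫ ω, η i ω = 0)
    (hvar : ∀ i, ∫ ω, (η i ω)^2 = (β i)^2)
    -- coefficients of the noisy data: ⟨y^δ, u_i⟩
    (d : ℕ → Ω → ℝ)
    (hd : ∀ i ω, d i ω = (if i ≤ N then σ i * c i else 0) + η i ω)
    -- error of truncated Tikhonov regularization at truncation level M
    (E : ℕ → Ω → X)
    (hE : ∀ M ω, E M ω =
      (∑ i ∈ Finset.Icc 1 M, (σ i / ((σ i)^2 + α) * d i ω) • v i)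
        - ∑ i ∈ Finset.Icc 1 N, (c i) • v i)
    (hα2 : ∀ m < N, (β (m+1))^2 / (c (m+1))^2 - (σ (m+1))^2 ≤ 2 * α) :
    ∀ M : ℕ, (∫ ω, ‖E N ω‖^2) ≤ (∫ ω, ‖E M ω‖^2) := by
  intro M
  have hrisk : ∀ L ≤ max M N, ∫ ω, ‖E L ω‖ ^ 2 = ∑ i ∈ Finset.Icc 1 (max M N),
      (biasCoeff σ c α N L i ^ 2 + noiseCoeff σ α L i ^ 2 * β i ^ 2) := fun L hL => by
    simp_rw [hE, hd, error_eq_sum σ c α N v _ hL (le_max_right M N)]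
    exact integral_norm_sq_sum_orthonormal hv hint hsq hmean hvar _ _ _
  rw [hrisk N (le_max_right M N), hrisk M (le_max_left M N)]
  refine Finset.sum_le_sum fun i hi => ?_
  obtain ⟨m, rfl⟩ : ∃ m, i = m + 1 := Nat.exists_eq_add_one.mpr (Finset.mem_Icc.mp hi).1
  exact component_risk_le σ c α N hα M (fun h => hc _ (Finset.mem_Icc.mpr ⟨le_add_self, h⟩))
    (hα2 m)

/-- For truncated Tikhonov regularization `T_α^{(M)} y = Σ_{i=1}^M σ_i/(σ_i²+α)⟨y,u_i⟩v_i`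
applied to `y^δ = Ax† + η` with `x† = Σ_{i=1}^N c_i v_i` (so that `⟨y^δ, u_i⟩ =
σ_i c_i + η_i` for `i ≤ N` and `η_i` for `i > N`), mean-zero noise coefficients with
variances `β_i²`: if `2α ≥ max{0, max_{m<N}(β_{m+1}²/c_{m+1}² − σ_{m+1}²)}`, then
truncating at the intrinsic dimension `N` minimizes the expected squared error,
`E‖E_N‖² ≤ E‖E_M‖²` for every `M`. -/
theorem truncated_tikhonov_optimal_truncation
    {X : Type*} [NormedAddCommGroup X] [InnerProductSpace ℝ X]
    {Ω : Type*} [MeasureSpace Ω] [IsProbabilityMeasure (volume : Measure Ω)]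
    (v : ℕ → X) (hv : Orthonormal ℝ v)
    (σ : ℕ → ℝ) (hσ : ∀ i, 0 < σ i)
    (N : ℕ) (c : ℕ → ℝ) (hc : ∀ i ∈ Finset.Icc 1 N, c i ≠ 0)
    (α : ℝ) (hα : 0 < α)
    (η : ℕ → Ω → ℝ) (β : ℕ → ℝ)
    (hint : ∀ i, Integrable (η i))
    (hsq : ∀ i, Integrable (fun ω => (η i ω)^2))
    (hmean : ∀ i, ∫ ω, η i ω = 0)
    (hvar : ∀ i, ∫ ω, (η i ω)^2 = (β i)^2)
    -- coefficients of the noisy data: ⟨y^δ, u_i⟩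
    (d : ℕ → Ω → ℝ)
    (hd : ∀ i ω, d i ω = (if i ≤ N then σ i * c i else 0) + η i ω)
    -- error of truncated Tikhonov regularization at truncation level M
    (E : ℕ → Ω → X)
    (hE : ∀ M ω, E M ω =
      (∑ i ∈ Finset.Icc 1 M, (σ i / ((σ i)^2 + α) * d i ω) • v i)
        - ∑ i ∈ Finset.Icc 1 N, (c i) • v i)
    (hα2 : ∀ m < N, (β (m+1))^2 / (c (m+1))^2 - (σ (m+1))^2 ≤ 2 * α) :
    ∀ M : ℕ, (∫ ω, ‖E N ω‖^2) ≤ (∫ ω, ‖E M ω‖^2) :=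
  truncated_tikhonov_optimal_truncation_general v hv σ N c hc α hα η β hint hsq hmean hvar d hd E hE
    hα2
end

section
/- Let A ∈ ℝ^{m×n}, W ∈ ℝ^{p×n}, α > 0, and y ∈ ℝ^m. If x̂₁ and x̂₂ are both minimizers of J(x) = ‖Ax − y‖₂² + α‖Wx‖₁, then Ax̂₁ = Ax̂₂ and ‖Wx̂₁‖₁ = ‖Wx̂₂‖₁. -/
/-!
The objective is a strictly convex function of `A x` plus a convex function of `x`. If two
minimizers had different images under `A`, their midpoint would have a strictly smaller
objective value. Once `A x̂₁ = A x̂₂`, equality of the two minimal values leaves equal `ℓ¹` terms.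
-/

open Set

theorem strictConvexOn_univ_norm_sq {E : Type*} [NormedAddCommGroup E] [InnerProductSpace ℝ E] :
    StrictConvexOn ℝ univ fun x : E ↦ ‖x‖ ^ 2 :=
  (strongConvexOn_iff_convex.2 (by simpa using convexOn_const 0 convex_univ)).strictConvexOn
    two_pos

theorem convexOn_univ_sum_abs_apply {E ι : Type*} [AddCommGroup E] [Module ℝ E] [Fintype ι]
    (W : E →ₗ[ℝ] EuclideanSpace ℝ ι) : ConvexOn ℝ univ fun x ↦ ∑ i, |W x i| := by
  have := convexOn_univ_norm.comp_linearMap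
    ((WithLp.linearEquiv 1 ℝ (ι → ℝ)).symm.toLinearMap ∘ₗ
      (WithLp.linearEquiv 2 ℝ (ι → ℝ)).toLinearMap ∘ₗ W)
  simpa [Function.comp_def, PiLp.norm_eq_of_L1] using this

theorem StrictConvexOn.map_eq_of_isMinOn_comp_add {𝕜 E F : Type*} [Field 𝕜] [LinearOrder 𝕜]
    [IsStrictOrderedRing 𝕜] [AddCommGroup E] [Module 𝕜 E] [AddCommGroup F] [Module 𝕜 F]
    {h : F → 𝕜} {g : E → 𝕜} (hh : StrictConvexOn 𝕜 univ h) (hg : ConvexOn 𝕜 univ g)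
    (A : E →ₗ[𝕜] F) {x₁ x₂ : E} (h₁ : IsMinOn (fun x ↦ h (A x) + g x) univ x₁)
    (h₂ : IsMinOn (fun x ↦ h (A x) + g x) univ x₂) : A x₁ = A x₂ := by
  by_contra hne
  set z := (2 : 𝕜)⁻¹ • x₁ + (2 : 𝕜)⁻¹ • x₂
  have half_pos : (0 : 𝕜) < 2⁻¹ := by norm_num
  have half_add_half : (2 : 𝕜)⁻¹ + 2⁻¹ = 1 := by norm_num
  have hAz : h (A z) < (2 : 𝕜)⁻¹ • h (A x₁) + (2 : 𝕜)⁻¹ • h (A x₂) := by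
    simpa [z] using hh.2 trivial trivial hne half_pos half_pos half_add_half
  have hgz : g z ≤ (2 : 𝕜)⁻¹ • g x₁ + (2 : 𝕜)⁻¹ • g x₂ :=
    hg.2 trivial trivial half_pos.le half_pos.le half_add_half
  have h₁z := isMinOn_univ_iff.1 h₁ z
  have h₂z := isMinOn_univ_iff.1 h₂ z
  simp only [smul_eq_mul] at hAz hgz h₁z h₂z
  linarith

/-- Any two minimizers of the generalized LASSO objective
`J(x) = ‖Ax − y‖² + α‖Wx‖₁` have the same image under `A` and the same `ℓ₁`
regularization value. -/
theorem glasso_minimizers_same_fit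
    (m n p : ℕ)
    (A : EuclideanSpace ℝ (Fin n) →L[ℝ] EuclideanSpace ℝ (Fin m))
    (W : EuclideanSpace ℝ (Fin n) →L[ℝ] EuclideanSpace ℝ (Fin p))
    (α : ℝ) (hα : 0 < α) (y : EuclideanSpace ℝ (Fin m))
    (x1 x2 : EuclideanSpace ℝ (Fin n))
    (hmin1 : ∀ x, ‖A x1 - y‖^2 + α * ∑ i, |W x1 i|
                  ≤ ‖A x - y‖^2 + α * ∑ i, |W x i|)
    (hmin2 : ∀ x, ‖A x2 - y‖^2 + α * ∑ i, |W x2 i|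
                  ≤ ‖A x - y‖^2 + α * ∑ i, |W x i|) :
    A x1 = A x2 ∧ (∑ i, |W x1 i|) = ∑ i, |W x2 i| := by
  have hfit : StrictConvexOn ℝ univ fun v ↦ ‖v - y‖ ^ 2 := by
    simpa [Function.comp_def, sub_eq_add_neg] using
      strictConvexOn_univ_norm_sq.translate_left (-y)
  have hreg : ConvexOn ℝ univ fun x ↦ α * ∑ i, |W x i| :=
    (convexOn_univ_sum_abs_apply W.toLinearMap).smul hα.le
  have hA : A x1 = A x2 := hfit.map_eq_of_isMinOn_comp_add hreg A.toLinearMap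
    (isMinOn_univ_iff.2 hmin1) (isMinOn_univ_iff.2 hmin2)
  have hJ := le_antisymm (hmin1 x2) (hmin2 x1)
  rw [hA] at hJ
  exact ⟨hA, mul_left_cancel₀ hα.ne' (add_left_cancel hJ)⟩
end
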